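/- For every finite simple graph H there exists a routed network of conflict width at most two whose routes are indexed by the vertices of H, in which two distinct routes share an arc if and only if the corresponding vertices are adjacent in H, such that for every integer k ≥ 1 the network admits a (k,1)-periodic assignment if and only if H admits a proper vertex coloring with k colors. -/

import Mathlib

/-- The set of `τ` consecutive residues modulo `P` starting at `t`. -/
def slotSet (P τ : ℕ) (t : ℤ) : Set (ZMod P) :=
  {s | ∃ k : ℕ, k < τ ∧ s = ((t + k : ℤ) : ZMod P)}

/-- The arcs of a route: its pairs of consecutive vertices. -/
def arcs {V : Type*} (r : List V) : List (V × V) := r.zip r.tail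

/-- Latency of the `i`-th vertex of the route `r`: the sum of the weights of the
first `i` arcs of `r`. -/
def latency {V : Type*} (ω : V → V → ℕ) (r : List V) (i : ℕ) : ℕ :=
  (((arcs r).map fun p => ω p.1 p.2).take i).sum

/-- Two routes with given offsets collide if they share an arc `(u, v)` and
their slot sets at `u` intersect. -/
def Collide {V : Type*} (ω : V → V → ℕ) (P τ : ℕ)
    (r₁ r₂ : List V) (m₁ m₂ : ℤ) : Prop :=
  ∃ i j : ℕ, i + 1 < r₁.length ∧ j + 1 < r₂.length ∧
    r₁[i]? = r₂[j]? ∧ r₁[i + 1]? = r₂[j + 1]? ∧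
    (slotSet P τ (m₁ + latency ω r₁ i) ∩ slotSet P τ (m₂ + latency ω r₂ j)).Nonempty

/-- A `(P,τ)`-periodic assignment: offsets such that no two distinct routes collide. -/
def IsPeriodicAssignment {V ι : Type*} (ω : V → V → ℕ) (routes : ι → List V)
    (P τ : ℕ) (m : ι → ℤ) : Prop :=
  ∀ a b : ι, a ≠ b → ¬ Collide ω P τ (routes a) (routes b) (m a) (m b)

/-
All weights are zero, so with `τ = 1` two routes collide exactly when they share an arc and
their offsets agree modulo `k`: a `(k,1)`-periodic assignment is a proper `k`-colouring of the
graph "the routes share an arc". It remains to realise `H` as that graph with conflict width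
two. The network's vertices are pairs `(s(u, v), b)` with `b : Bool`, and route `u` runs in turn
through the arcs `(s(u, v), false) → (s(u, v), true)` for the neighbours `v` of `u`. Every arc of
route `u` starts at a vertex labelled by a pair containing `u`, so at most two routes use it; a
connecting arc `(s(u, v), true) → (s(u, w), false)`, `v ≠ w`, lies on no other route, since that
route would have to be both `v` and `w`.
-/

theorem mem_arcs_iff {V : Type*} {r : List V} {p : V × V} :
    p ∈ arcs r ↔ ∃ i, r[i]? = some p.1 ∧ r[i + 1]? = some p.2 := by
  simp [arcs, List.mem_iff_getElem?, List.getElem?_zip_eq_some]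

theorem arcs_cons {V : Type*} (x : V) (l : List V) :
    arcs (x :: l) = (l.head?.map (x, ·)).toList ++ arcs l := by
  cases l <;> rfl

theorem mem_arcs_flatMap_pair {α β : Type*} (f g : α → β) (l : List α) (p : β × β) :
    p ∈ arcs (l.flatMap fun a => [f a, g a]) ↔
      (∃ a ∈ l, p = (f a, g a)) ∨ ∃ q ∈ arcs l, p = (g q.1, f q.2) := by
  induction l with
  | nil => simp [arcs]
  | cons a t ih =>
    have hhead : (t.flatMap fun a => [f a, g a]).head? = t.head?.map f := by cases t <;> rfl
    rw [List.flatMap_cons, List.cons_append, List.cons_append, List.nil_append, arcs_cons,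
      arcs_cons, hhead, arcs_cons a t]
    cases t.head? <;> simp [ih, or_assoc, or_left_comm, eq_comm]

theorem fst_ne_snd_of_mem_arcs {V : Type*} {r : List V} (hr : r.Nodup) {p : V × V}
    (hp : p ∈ arcs r) : p.1 ≠ p.2 := by
  induction r with
  | nil => simp [arcs] at hp
  | cons x l ih =>
    rw [arcs_cons, List.mem_append] at hp
    rcases hp with hp | hp
    · cases l <;> simp_all
    · exact ih hr.of_cons hp

theorem latency_zero {V : Type*} (r : List V) (i : ℕ) : latency (fun _ _ => 0) r i = 0 := by
  simp [latency]

theorem slotSet_one (P : ℕ) (t : ℤ) : slotSet P 1 t = {(t : ZMod P)} := by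
  ext; simp [slotSet]

theorem exists_common_arc_iff {V : Type*} (r₁ r₂ : List V) :
    (∃ p, p ∈ arcs r₁ ∧ p ∈ arcs r₂) ↔ ∃ i j, i + 1 < r₁.length ∧ j + 1 < r₂.length ∧
      r₁[i]? = r₂[j]? ∧ r₁[i + 1]? = r₂[j + 1]? := by
  simp only [mem_arcs_iff]
  constructor
  · rintro ⟨p, ⟨i, hi, hi'⟩, ⟨j, hj, hj'⟩⟩
    exact ⟨i, j, (List.getElem?_eq_some_iff.1 hi').1, (List.getElem?_eq_some_iff.1 hj').1,
      hi.trans hj.symm, hi'.trans hj'.symm⟩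
  · rintro ⟨i, j, hi, hj, h, h'⟩
    exact ⟨(r₁[i], r₁[i + 1]), ⟨i, by simp, by simp⟩, ⟨j, by simp [← h], by simp [← h']⟩⟩

theorem collide_zero_one_iff {V : Type*} (P : ℕ) (r₁ r₂ : List V) (m₁ m₂ : ℤ) :
    Collide (fun _ _ => 0) P 1 r₁ r₂ m₁ m₂ ↔
      (∃ p, p ∈ arcs r₁ ∧ p ∈ arcs r₂) ∧ (m₁ : ZMod P) = m₂ := by
  simp only [Collide, latency_zero, Nat.cast_zero, add_zero, slotSet_one,
    Set.singleton_inter_nonempty, Set.mem_singleton_iff, exists_common_arc_iff]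
  exact ⟨fun ⟨i, j, hi, hj, h, h', hm⟩ => ⟨⟨i, j, hi, hj, h, h'⟩, hm⟩,
    fun ⟨⟨i, j, hi, hj, h, h'⟩, hm⟩ => ⟨i, j, hi, hj, h, h', hm⟩⟩

theorem isPeriodicAssignment_zero_one_iff {V W : Type*} {H : SimpleGraph W}
    {routes : W → List V}
    (hshare : ∀ u v, u ≠ v → ((∃ p, p ∈ arcs (routes u) ∧ p ∈ arcs (routes v)) ↔ H.Adj u v))
    (P : ℕ) (m : W → ℤ) :
    IsPeriodicAssignment (fun _ _ => 0) routes P 1 m ↔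
      ∀ u v, H.Adj u v → (m u : ZMod P) ≠ m v := by
  simp only [IsPeriodicAssignment, collide_zero_one_iff, not_and]
  refine ⟨fun h u v huv => h u v huv.ne ((hshare u v huv.ne).2 huv), fun h u v hne hs => ?_⟩
  exact h u v ((hshare u v hne).1 hs)

theorem exists_isPeriodicAssignment_iff_exists_coloring {V W : Type*} {H : SimpleGraph W}
    {routes : W → List V}
    (hshare : ∀ u v, u ≠ v → ((∃ p, p ∈ arcs (routes u) ∧ p ∈ arcs (routes v)) ↔ H.Adj u v))
    (k : ℕ) [NeZero k] :
    (∃ m : W → ℤ, IsPeriodicAssignment (fun _ _ => 0) routes k 1 m) ↔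
      ∃ f : W → Fin k, ∀ u v, H.Adj u v → f u ≠ f v := by
  simp only [isPeriodicAssignment_zero_one_iff hshare]
  constructor
  · rintro ⟨m, hm⟩
    exact ⟨fun u => (ZMod.finEquiv k).symm (m u), fun u v huv h => hm u v huv
      ((ZMod.finEquiv k).symm.injective h)⟩
  · rintro ⟨f, hf⟩
    refine ⟨fun u => ((ZMod.finEquiv k (f u)).cast : ℤ), fun u v huv h => hf u v huv ?_⟩
    simpa only [ZMod.intCast_zmod_cast, (ZMod.finEquiv k).injective.eq_iff] using h

theorem ncard_preimage_mem_sym2_le_two {W α : Type*} {e : W → α}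
    (he : e.Injective) (z : Sym2 α) : {u | e u ∈ z}.ncard ≤ 2 := by
  induction z using Sym2.ind with
  | _ x y =>
    calc {u | e u ∈ s(x, y)}.ncard ≤ ({x, y} : Set α).ncard :=
          Set.ncard_le_ncard_of_injOn e (by simp [Sym2.mem_iff]) he.injOn
      _ ≤ 2 := (Set.ncard_insert_le x {y}).trans (by simp)

theorem eq_of_sym2_mk_eq_of_ne {W α : Type*} {e : W → α} (he : e.Injective) {u v a b : W}
    (huv : u ≠ v) (h : s(e u, e a) = s(e v, e b)) : a = v := by
  rcases Sym2.eq_iff.1 h with ⟨h, -⟩ | ⟨-, h⟩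
  · exact absurd (he h) huv
  · exact he h

section EdgeGadget

variable {W α : Type*} [Fintype W] (H : SimpleGraph W) [DecidableRel H.Adj] (e : W → α)

noncomputable def edgeGadgetRoute (u : W) : List (Sym2 α × Bool) :=
  (H.neighborFinset u).toList.flatMap fun v => [(s(e u, e v), false), (s(e u, e v), true)]

variable {H e}

theorem mem_arcs_edgeGadgetRoute {u : W} {p : (Sym2 α × Bool) × (Sym2 α × Bool)} :
    p ∈ arcs (edgeGadgetRoute H e u) ↔
      (∃ v, H.Adj u v ∧ p = ((s(e u, e v), false), (s(e u, e v), true))) ∨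
        ∃ q ∈ arcs (H.neighborFinset u).toList,
          p = ((s(e u, e q.1), true), (s(e u, e q.2), false)) := by
  simp [edgeGadgetRoute, mem_arcs_flatMap_pair]

theorem edgeGadgetRoute_nodup (he : e.Injective) (u : W) : (edgeGadgetRoute H e u).Nodup := by
  refine List.nodup_flatMap.2 ⟨fun v _ => by simp, ?_⟩
  refine (H.neighborFinset u).nodup_toList.imp fun {v w} hvw => ?_
  have hne : s(e u, e v) ≠ s(e u, e w) := by rwa [Ne, Sym2.congr_right, he.eq_iff]
  simp [Function.onFun, hne.symm]

theorem ncard_edgeGadgetRoute_through_arc_le_two (he : e.Injective)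
    (p : (Sym2 α × Bool) × (Sym2 α × Bool)) :
    {u | p ∈ arcs (edgeGadgetRoute H e u)}.ncard ≤ 2 := by
  refine (Set.ncard_le_ncard fun u hu => ?_).trans (ncard_preimage_mem_sym2_le_two he p.1.1)
  rcases mem_arcs_edgeGadgetRoute.1 hu with ⟨v, -, rfl⟩ | ⟨q, -, rfl⟩ <;> exact Sym2.mem_mk_left _ _

theorem exists_common_arc_edgeGadgetRoute_iff (he : e.Injective) {u v : W} (huv : u ≠ v) :
    (∃ p, p ∈ arcs (edgeGadgetRoute H e u) ∧ p ∈ arcs (edgeGadgetRoute H e v)) ↔ H.Adj u v := by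
  constructor
  · rintro ⟨p, hpu, hpv⟩
    rcases mem_arcs_edgeGadgetRoute.1 hpu with ⟨a, hua, rfl⟩ | ⟨q, hq, rfl⟩ <;>
      rcases mem_arcs_edgeGadgetRoute.1 hpv with ⟨b, -, hp⟩ | ⟨q', -, hp⟩ <;>
      simp only [Prod.mk.injEq, Bool.false_eq_true, Bool.true_eq_false, and_false,
        and_true] at hp
    · exact eq_of_sym2_mk_eq_of_ne he huv hp.1 ▸ hua
    · exact absurd ((eq_of_sym2_mk_eq_of_ne he huv hp.1).trans
        (eq_of_sym2_mk_eq_of_ne he huv hp.2).symm)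
        (fst_ne_snd_of_mem_arcs (H.neighborFinset u).nodup_toList hq)
  · intro hadj
    refine ⟨_, mem_arcs_edgeGadgetRoute.2 (Or.inl ⟨v, hadj, rfl⟩),
      mem_arcs_edgeGadgetRoute.2 (Or.inl ⟨u, hadj.symm, ?_⟩)⟩
    rw [Sym2.eq_swap]

end EdgeGadget

theorem vertex_coloring_reduction_general {W : Type*} [Fintype W]
    (H : SimpleGraph W) [DecidableRel H.Adj] :
    ∃ (V : Type) (_ : Fintype V) (routes : W → List V) (ω : V → V → ℕ),
      (∀ u : W, (routes u).Nodup) ∧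
      (∀ p : V × V, {u : W | p ∈ arcs (routes u)}.ncard ≤ 2) ∧
      (∀ u v : W, u ≠ v →
        ((∃ p : V × V, p ∈ arcs (routes u) ∧ p ∈ arcs (routes v)) ↔ H.Adj u v)) ∧
      (∀ k : ℕ, 1 ≤ k →
        ((∃ m : W → ℤ, IsPeriodicAssignment ω routes k 1 m) ↔
         (∃ f : W → Fin k, ∀ u v : W, H.Adj u v → f u ≠ f v))) := by
  have he := (Fintype.equivFin W).injective
  have hshare (u v : W) (huv : u ≠ v) := exists_common_arc_edgeGadgetRoute_iff (H := H) he huv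
  refine ⟨Sym2 (Fin (Fintype.card W)) × Bool, inferInstance,
    edgeGadgetRoute H (Fintype.equivFin W), fun _ _ => 0, edgeGadgetRoute_nodup he,
    ncard_edgeGadgetRoute_through_arc_le_two he, hshare, fun k hk => ?_⟩
  have : NeZero k := ⟨by omega⟩
  exact exists_isPeriodicAssignment_iff_exists_coloring hshare k

/-- For every finite simple graph `H` there is a routed network of conflict width
at most two, with routes indexed by the vertices of `H`, in which two distinct
routes share an arc exactly when the corresponding vertices are adjacent, and
which admits a `(k,1)`-periodic assignment exactly when `H` is properly
`k`-vertex-colorable. -/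
theorem vertex_coloring_reduction {W : Type*} [Fintype W] [DecidableEq W]
    (H : SimpleGraph W) [DecidableRel H.Adj] :
    ∃ (V : Type) (_ : Fintype V) (routes : W → List V) (ω : V → V → ℕ),
      (∀ u : W, (routes u).Nodup) ∧
      (∀ p : V × V, {u : W | p ∈ arcs (routes u)}.ncard ≤ 2) ∧
      (∀ u v : W, u ≠ v →
        ((∃ p : V × V, p ∈ arcs (routes u) ∧ p ∈ arcs (routes v)) ↔ H.Adj u v)) ∧
      (∀ k : ℕ, 1 ≤ k →
        ((∃ m : W → ℤ, IsPeriodicAssignment ω routes k 1 m) ↔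
         (∃ f : W → Fin k, ∀ u v : W, H.Adj u v → f u ≠ f v))) :=
  vertex_coloring_reduction_general H
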